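/- arXiv:1901.06789 — 7 statements merged into one kernel-verified Lean document; each statement's English description precedes it below -/
import Mathlib

section
/- Let X be a random vector in ℝⁿ with probability density f : ℝⁿ → [0,∞) with respect to Lebesgue measure, and let u ∈ ℝⁿ be a unit vector. Let g : ℝ → [0,∞) be a probability density (with respect to Lebesgue measure on ℝ) of ⟨X,u⟩, i.e., a density of the pushforward of the measure f·(Lebesgue) under the map x ↦ ⟨x,u⟩. Suppose the limits I_1(X·u) = lim_{ε→0⁺} (1/ε) ∫_ℝ |g(t) − g(t−ε)| dt and I_1(X)_u = lim_{ε→0⁺} (1/ε) ∫_{ℝⁿ} |f(x) − f(x−εu)| dx both exist as real numbers. Then I_1(X·u) ≤ I_1(X)_u. -/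
open MeasureTheory Filter Topology
open scoped InnerProductSpace ENNReal

/-!
For `ε > 0`, `⟨X + εu, u⟩ = ⟨X, u⟩ + ε`, so the pushforward of the density `f(· - εu)` under
`x ↦ ⟨x, u⟩` is `g(· - ε)`. Pushing forward is an `L¹` contraction: testing `g - g(· - ε)`
against its sign `ψ` gives `∫ |g - g(· - ε)| = ∫ ψ(⟨x, u⟩) (f x - f (x - εu)) dx
≤ ∫ |f - f(· - εu)|`. Dividing by `ε` and letting `ε → 0⁺` yields the inequality of the limits.
-/

section Pushforward

variable {α β : Type*} [MeasurableSpace α] [MeasurableSpace β] {μ : Measure α} {ν : Measure β}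
  {π : α → β}

theorem integral_withDensity_ofReal {f : α → ℝ} (hf : Measurable f) (hf0 : 0 ≤ f) (ψ : α → ℝ) :
    ∫ x, ψ x ∂μ.withDensity (fun x => ENNReal.ofReal (f x)) = ∫ x, ψ x * f x ∂μ := by
  rw [integral_withDensity_eq_integral_toReal_smul hf.ennreal_ofReal
    (ae_of_all _ fun _ => ENNReal.ofReal_lt_top)]
  congr 1 with x
  rw [ENNReal.toReal_ofReal (hf0 x), smul_eq_mul, mul_comm]

theorem integral_mul_eq_of_map_withDensity (hπ : Measurable π) {f : α → ℝ} {g : β → ℝ}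
    (hf : Measurable f) (hf0 : 0 ≤ f) (hg : Measurable g) (hg0 : 0 ≤ g)
    (h : (μ.withDensity fun x => ENNReal.ofReal (f x)).map π
      = ν.withDensity fun t => ENNReal.ofReal (g t))
    {ψ : β → ℝ} (hψ : Measurable ψ) :
    ∫ t, ψ t * g t ∂ν = ∫ x, ψ (π x) * f x ∂μ := by
  rw [← integral_withDensity_ofReal hg hg0, ← h, integral_map hπ.aemeasurable
    hψ.aestronglyMeasurable, integral_withDensity_ofReal hf hf0]

theorem MeasureTheory.Integrable.of_map_withDensity (hπ : Measurable π) {f : α → ℝ} {g : β → ℝ}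
    (hf : Integrable f μ) (hg : Measurable g) (hg0 : 0 ≤ g)
    (h : (μ.withDensity fun x => ENNReal.ofReal (f x)).map π
      = ν.withDensity fun t => ENNReal.ofReal (g t)) :
    Integrable g ν := by
  refine ⟨hg.aestronglyMeasurable, ?_⟩
  have hmass := congrArg (· Set.univ) h
  simp only [Measure.map_apply hπ MeasurableSet.univ, Set.preimage_univ,
    withDensity_apply _ MeasurableSet.univ, setLIntegral_univ] at hmass
  rw [hasFiniteIntegral_iff_ofReal (ae_of_all _ hg0), ← hmass]
  exact hf.lintegral_lt_top

theorem integral_mul_le_integral_abs_of_abs_le_one {ψ f : α → ℝ} (hψ : AEStronglyMeasurable ψ μ)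
    (hψ1 : ∀ x, |ψ x| ≤ 1) (hf : Integrable f μ) :
    ∫ x, ψ x * f x ∂μ ≤ ∫ x, |f x| ∂μ := by
  refine integral_mono (hf.bdd_mul hψ (ae_of_all _ hψ1)) hf.abs fun x => ?_
  calc ψ x * f x ≤ |ψ x| * |f x| := by rw [← abs_mul]; exact le_abs_self _
    _ ≤ |f x| := mul_le_of_le_one_left (abs_nonneg _) (hψ1 x)

theorem integral_abs_sub_le_of_map_withDensity (hπ : Measurable π) {f₁ f₂ : α → ℝ}
    {g₁ g₂ : β → ℝ} (hf₁ : Measurable f₁) (hf₂ : Measurable f₂) (hf₁0 : 0 ≤ f₁) (hf₂0 : 0 ≤ f₂)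
    (hf₁i : Integrable f₁ μ) (hf₂i : Integrable f₂ μ)
    (hg₁ : Measurable g₁) (hg₂ : Measurable g₂) (hg₁0 : 0 ≤ g₁) (hg₂0 : 0 ≤ g₂)
    (h₁ : (μ.withDensity fun x => ENNReal.ofReal (f₁ x)).map π
      = ν.withDensity fun t => ENNReal.ofReal (g₁ t))
    (h₂ : (μ.withDensity fun x => ENNReal.ofReal (f₂ x)).map π
      = ν.withDensity fun t => ENNReal.ofReal (g₂ t)) :
    ∫ t, |g₁ t - g₂ t| ∂ν ≤ ∫ x, |f₁ x - f₂ x| ∂μ := by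
  set ψ : β → ℝ := fun t => if g₂ t ≤ g₁ t then 1 else -1
  have hψ : Measurable ψ := Measurable.ite (measurableSet_le hg₂ hg₁) measurable_const
    measurable_const
  have hψ1 (t : β) : |ψ t| ≤ 1 := by simp only [ψ]; split_ifs <;> norm_num
  have hψg (t : β) : |g₁ t - g₂ t| = ψ t * g₁ t - ψ t * g₂ t := by
    simp only [ψ]; split_ifs with h
    · rw [abs_of_nonneg (sub_nonneg.2 h)]; ring
    · rw [abs_of_neg (sub_neg.2 (not_le.1 h))]; ring
  have hψi {g : β → ℝ} (hg : Integrable g ν) : Integrable (fun t => ψ t * g t) ν :=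
    hg.bdd_mul hψ.aestronglyMeasurable (ae_of_all _ hψ1)
  have hψπi {f : α → ℝ} (hf : Integrable f μ) : Integrable (fun x => ψ (π x) * f x) μ :=
    hf.bdd_mul (hψ.comp hπ).aestronglyMeasurable (ae_of_all _ fun _ => hψ1 _)
  calc ∫ t, |g₁ t - g₂ t| ∂ν = ∫ t, ψ t * g₁ t ∂ν - ∫ t, ψ t * g₂ t ∂ν := by
        simp_rw [hψg]
        exact integral_sub (hψi (hf₁i.of_map_withDensity hπ hg₁ hg₁0 h₁))
          (hψi (hf₂i.of_map_withDensity hπ hg₂ hg₂0 h₂))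
    _ = ∫ x, ψ (π x) * f₁ x ∂μ - ∫ x, ψ (π x) * f₂ x ∂μ := by
        rw [integral_mul_eq_of_map_withDensity hπ hf₁ hf₁0 hg₁ hg₁0 h₁ hψ,
          integral_mul_eq_of_map_withDensity hπ hf₂ hf₂0 hg₂ hg₂0 h₂ hψ]
    _ = ∫ x, ψ (π x) * (f₁ x - f₂ x) ∂μ := by
        simp_rw [mul_sub]
        exact (integral_sub (hψπi hf₁i) (hψπi hf₂i)).symm
    _ ≤ ∫ x, |f₁ x - f₂ x| ∂μ :=
        integral_mul_le_integral_abs_of_abs_le_one (hψ.comp hπ).aestronglyMeasurable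
          (fun _ => hψ1 _) (hf₁i.sub hf₂i)

end Pushforward

section Translation

variable {G H : Type*} [AddGroup G] [MeasurableSpace G] [MeasurableAdd G]
  [AddGroup H] [MeasurableSpace H] [MeasurableAdd H]

theorem withDensity_comp_sub (μ : Measure G) [μ.IsAddRightInvariant] (F : G → ℝ≥0∞) (a : G) :
    μ.withDensity (fun x => F (x - a)) = (μ.withDensity F).map (· + a) := by
  ext s hs
  rw [withDensity_apply _ hs, Measure.map_apply (measurable_add_const a) hs,
    withDensity_apply _ (measurable_add_const a hs),
    ← (measurePreserving_add_right μ a).setLIntegral_comp_preimage_emb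
      (measurableEmbedding_addRight a)]
  simp only [add_sub_cancel_right]

theorem map_withDensity_comp_sub {μ : Measure G} [μ.IsAddRightInvariant] {ν : Measure H}
    [ν.IsAddRightInvariant] {π : G → H} (hπ : Measurable π) {a : G} {b : H}
    (hπab : ∀ x, π (x + a) = π x + b) {F : G → ℝ≥0∞} {E : H → ℝ≥0∞}
    (h : (μ.withDensity F).map π = ν.withDensity E) :
    (μ.withDensity fun x => F (x - a)).map π = ν.withDensity fun t => E (t - b) := by
  have hcomm : π ∘ (· + a) = (· + b) ∘ π := funext hπab
  rw [withDensity_comp_sub, withDensity_comp_sub, ← h,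
    Measure.map_map hπ (measurable_add_const a), hcomm,
    Measure.map_map (measurable_add_const b) hπ]

end Translation

/-- Data-processing for the directional L1-Fisher information: projecting onto a
unit direction does not increase the L1-Fisher information (Lemma `l1_direction`). -/
theorem l1Fisher_projection_le
    (n : ℕ)
    (f : EuclideanSpace ℝ (Fin n) → ℝ) (hf0 : ∀ x, 0 ≤ f x)
    (hfm : Measurable f) (hf1 : ∫ x, f x = 1)
    (u : EuclideanSpace ℝ (Fin n)) (hu : ‖u‖ = 1)
    (g : ℝ → ℝ) (hg0 : ∀ t, 0 ≤ g t) (hgm : Measurable g)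
    (hg : Measure.map (fun x => ⟪x, u⟫_ℝ)
        (volume.withDensity (fun x => ENNReal.ofReal (f x)))
      = volume.withDensity (fun t => ENNReal.ofReal (g t)))
    (Ig If : ℝ)
    (hIg : Tendsto (fun ε : ℝ => (1 / ε) * ∫ t : ℝ, |g t - g (t - ε)|)
      (𝓝[>] (0 : ℝ)) (𝓝 Ig))
    (hIf : Tendsto (fun ε : ℝ => (1 / ε) * ∫ x : EuclideanSpace ℝ (Fin n), |f x - f (x - ε • u)|)
      (𝓝[>] (0 : ℝ)) (𝓝 If)) :
    Ig ≤ If := by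
  have hπ : Measurable fun x : EuclideanSpace ℝ (Fin n) => ⟪x, u⟫_ℝ :=
    (continuous_id.inner continuous_const).measurable
  have hfi : Integrable f := Integrable.of_integral_ne_zero (by rw [hf1]; exact one_ne_zero)
  have hshift (ε : ℝ) (x : EuclideanSpace ℝ (Fin n)) : ⟪x + ε • u, u⟫_ℝ = ⟪x, u⟫_ℝ + ε := by
    rw [inner_add_left, real_inner_smul_left, real_inner_self_eq_norm_sq, hu]
    ring
  have hdiff (ε : ℝ) : ∫ t, |g t - g (t - ε)| ≤ ∫ x, |f x - f (x - ε • u)| :=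
    integral_abs_sub_le_of_map_withDensity hπ hfm (hfm.comp (measurable_sub_const _)) hf0
      (fun _ => hf0 _) hfi (hfi.comp_sub_right _) hgm (hgm.comp (measurable_sub_const _)) hg0
      (fun _ => hg0 _) hg
      (map_withDensity_comp_sub (F := fun x => ENNReal.ofReal (f x))
        (E := fun t => ENNReal.ofReal (g t)) hπ (hshift ε) hg)
  refine le_of_tendsto_of_tendsto hIg hIf ?_
  filter_upwards [self_mem_nhdsWithin] with ε hε
  exact mul_le_mul_of_nonneg_left (hdiff ε) (one_div_nonneg.2 (le_of_lt hε))
end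

section
/- Let X = (X_1,…,X_n) be a random vector in ℝⁿ with probability density f : ℝⁿ → [0,∞) with respect to Lebesgue measure, and for each i = 1,…,n let f_i : ℝ → [0,∞) be a probability density (with respect to Lebesgue measure on ℝ) of the coordinate X_i, i.e., a density of the pushforward of f·(Lebesgue) under x ↦ x_i. Suppose that for each i the limits I_1(X_i) = lim_{ε→0⁺} (1/ε) ∫_ℝ |f_i(t) − f_i(t−ε)| dt and I_1(X)_{e_i} = lim_{ε→0⁺} (1/ε) ∫_{ℝⁿ} |f(x) − f(x−ε e_i)| dx exist as real numbers. Then ∑_{i=1}^n I_1(X_i) ≤ ∑_{i=1}^n I_1(X)_{e_i}. -/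
/-!
Total variation cannot increase under a measurable map: if `π` pushes the densities `f, f'`
forward to `g, g'`, then testing `g - g'` against the set `A = {g' ≤ g}` and its complement shows
`∫ |g - g'| ≤ ∫ |f - f'|`. A coordinate projection intertwines the translation by `ε eᵢ` on `ℝⁿ`
with the translation by `ε` on `ℝ`, so it pushes `f(· - ε eᵢ)` forward to `gᵢ(· - ε)`. Hence each
difference quotient of `I₁(Xᵢ)` is bounded by the corresponding one of `I₁(X)_{eᵢ}`, and the
inequality passes to the limits and to the sum.
-/

open MeasureTheory Filter Topology Set
open scoped ENNReal

section Pushforward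

variable {X Y : Type*} [MeasurableSpace X] [MeasurableSpace Y] {μ : Measure X} {ν : Measure Y}
  {π : X → Y}

theorem integral_abs_le_of_setIntegral_eq_preimage (hπ : Measurable π) {k : X → ℝ} {h : Y → ℝ}
    (hhm : Measurable h) (hh : Integrable h ν) (hk : Integrable k μ)
    (H : ∀ A, MeasurableSet A → ∫ y in A, h y ∂ν = ∫ x in π ⁻¹' A, k x ∂μ) :
    ∫ y, |h y| ∂ν ≤ ∫ x, |k x| ∂μ := by
  set A := {y | 0 ≤ h y}
  have hA : MeasurableSet A := measurableSet_le measurable_const hhm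
  have hpos : ∫ y in A, |h y| ∂ν = ∫ y in A, h y ∂ν :=
    setIntegral_congr_fun hA fun y hy => abs_of_nonneg hy
  have hneg : ∫ y in Aᶜ, |h y| ∂ν = -∫ y in Aᶜ, h y ∂ν := by
    rw [← integral_neg]
    exact setIntegral_congr_fun hA.compl fun y hy => abs_of_neg (not_le.mp hy)
  have hk_pos : ∫ x in π ⁻¹' A, k x ∂μ ≤ ∫ x in π ⁻¹' A, |k x| ∂μ :=
    integral_mono hk.integrableOn hk.abs.integrableOn fun x => le_abs_self _
  have hk_neg : -∫ x in π ⁻¹' Aᶜ, k x ∂μ ≤ ∫ x in (π ⁻¹' A)ᶜ, |k x| ∂μ := by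
    rw [← integral_neg, preimage_compl]
    exact integral_mono hk.neg.integrableOn hk.abs.integrableOn fun x => neg_le_abs _
  rw [← integral_add_compl hA hh.abs, hpos, hneg, H A hA, H _ hA.compl,
    ← integral_add_compl (hπ hA) hk.abs]
  linarith

theorem setIntegral_eq_toReal_withDensity_ofReal {f : X → ℝ} (hf0 : ∀ x, 0 ≤ f x)
    (hfm : Measurable f) {s : Set X} (hs : MeasurableSet s) :
    ∫ x in s, f x ∂μ = (μ.withDensity (fun x => ENNReal.ofReal (f x)) s).toReal := by
  rw [withDensity_apply _ hs,
    integral_eq_lintegral_of_nonneg_ae (ae_of_all _ hf0) hfm.aestronglyMeasurable]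

variable {f : X → ℝ} {g : Y → ℝ}

theorem setIntegral_preimage_of_map_withDensity (hπ : Measurable π) (hf0 : ∀ x, 0 ≤ f x)
    (hfm : Measurable f) (hg0 : ∀ y, 0 ≤ g y) (hgm : Measurable g)
    (hmap : (μ.withDensity fun x => ENNReal.ofReal (f x)).map π
      = ν.withDensity fun y => ENNReal.ofReal (g y))
    {A : Set Y} (hA : MeasurableSet A) :
    ∫ y in A, g y ∂ν = ∫ x in π ⁻¹' A, f x ∂μ := by
  rw [setIntegral_eq_toReal_withDensity_ofReal hg0 hgm hA,
    setIntegral_eq_toReal_withDensity_ofReal hf0 hfm (hπ hA), ← hmap, Measure.map_apply hπ hA]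

theorem integrable_of_map_withDensity (hπ : Measurable π) (hf : Integrable f μ)
    (hg0 : ∀ y, 0 ≤ g y) (hgm : Measurable g)
    (hmap : (μ.withDensity fun x => ENNReal.ofReal (f x)).map π
      = ν.withDensity fun y => ENNReal.ofReal (g y)) :
    Integrable g ν := by
  refine ⟨hgm.aestronglyMeasurable, (hasFiniteIntegral_iff_ofReal (ae_of_all _ hg0)).mpr ?_⟩
  calc ∫⁻ y, ENNReal.ofReal (g y) ∂ν
      = (μ.withDensity fun x => ENNReal.ofReal (f x)) (π ⁻¹' univ) := by
        rw [← Measure.map_apply hπ MeasurableSet.univ, hmap, withDensity_apply _ MeasurableSet.univ,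
          Measure.restrict_univ]
    _ = ∫⁻ x, ENNReal.ofReal (f x) ∂μ := by
        rw [preimage_univ, withDensity_apply _ MeasurableSet.univ, Measure.restrict_univ]
    _ ≤ ∫⁻ x, ‖f x‖ₑ ∂μ := lintegral_mono fun x => Real.ofReal_le_enorm _
    _ < ∞ := hf.2

theorem integral_abs_sub_le_of_map_withDensity_s5 (hπ : Measurable π) {f' : X → ℝ} {g' : Y → ℝ}
    (hf0 : ∀ x, 0 ≤ f x) (hf'0 : ∀ x, 0 ≤ f' x) (hfm : Measurable f) (hf'm : Measurable f')
    (hf : Integrable f μ) (hf' : Integrable f' μ)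
    (hg0 : ∀ y, 0 ≤ g y) (hg'0 : ∀ y, 0 ≤ g' y) (hgm : Measurable g) (hg'm : Measurable g')
    (hmap : (μ.withDensity fun x => ENNReal.ofReal (f x)).map π
      = ν.withDensity fun y => ENNReal.ofReal (g y))
    (hmap' : (μ.withDensity fun x => ENNReal.ofReal (f' x)).map π
      = ν.withDensity fun y => ENNReal.ofReal (g' y)) :
    ∫ y, |g y - g' y| ∂ν ≤ ∫ x, |f x - f' x| ∂μ := by
  have hg := integrable_of_map_withDensity hπ hf hg0 hgm hmap
  have hg' := integrable_of_map_withDensity hπ hf' hg'0 hg'm hmap'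
  refine integral_abs_le_of_setIntegral_eq_preimage hπ (hgm.sub hg'm) (hg.sub hg') (hf.sub hf')
    fun A hA => ?_
  rw [integral_sub hg.integrableOn hg'.integrableOn, integral_sub hf.integrableOn hf'.integrableOn,
    setIntegral_preimage_of_map_withDensity hπ hf0 hfm hg0 hgm hmap hA,
    setIntegral_preimage_of_map_withDensity hπ hf'0 hf'm hg'0 hg'm hmap' hA]

end Pushforward

section Translation

variable {G H : Type*} [AddGroup G] [MeasurableSpace G] [MeasurableAdd G]
  [AddGroup H] [MeasurableSpace H] [MeasurableAdd H]

theorem map_add_right_withDensity (μ : Measure G) [μ.IsAddRightInvariant] (F : G → ℝ≥0∞)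
    (v : G) : (μ.withDensity F).map (· + v) = μ.withDensity fun x => F (x - v) := by
  ext s hs
  rw [Measure.map_apply (measurable_add_const v) hs, withDensity_apply _ (measurable_add_const v hs),
    withDensity_apply _ hs, ← (measurePreserving_add_right μ v).setLIntegral_comp_preimage_emb
      (measurableEmbedding_addRight v) (fun x => F (x - v)) s]
  simp only [add_sub_cancel_right]

theorem map_withDensity_comp_sub_of_map_add (μ : Measure G) [μ.IsAddRightInvariant]
    (ν : Measure H) [ν.IsAddRightInvariant] {π : G → H} (hπ : Measurable π)
    {F : G → ℝ≥0∞} {Φ : H → ℝ≥0∞} (hmap : (μ.withDensity F).map π = ν.withDensity Φ)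
    {v : G} {c : H} (hπv : ∀ x, π (x + v) = π x + c) :
    (μ.withDensity fun x => F (x - v)).map π = ν.withDensity fun y => Φ (y - c) := by
  rw [← map_add_right_withDensity, ← map_add_right_withDensity, ← hmap,
    Measure.map_map hπ (measurable_add_const v), Measure.map_map (measurable_add_const c) hπ]
  exact congrArg (Measure.map · _) (funext hπv)

theorem integral_abs_sub_comp_sub_le_of_map_withDensity [MeasurableSub G] [MeasurableSub H]
    (μ : Measure G) [μ.IsAddRightInvariant]
    (ν : Measure H) [ν.IsAddRightInvariant] {π : G → H} (hπ : Measurable π)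
    {f : G → ℝ} {g : H → ℝ} (hf0 : ∀ x, 0 ≤ f x) (hfm : Measurable f) (hf : Integrable f μ)
    (hg0 : ∀ y, 0 ≤ g y) (hgm : Measurable g)
    (hmap : (μ.withDensity fun x => ENNReal.ofReal (f x)).map π
      = ν.withDensity fun y => ENNReal.ofReal (g y))
    {v : G} {c : H} (hπv : ∀ x, π (x + v) = π x + c) :
    ∫ y, |g y - g (y - c)| ∂ν ≤ ∫ x, |f x - f (x - v)| ∂μ :=
  integral_abs_sub_le_of_map_withDensity_s5 hπ hf0 (fun _ => hf0 _) hfm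
    (hfm.comp (measurable_sub_const v)) hf (hf.comp_sub_right v) hg0 (fun _ => hg0 _) hgm
    (hgm.comp (measurable_sub_const c)) hmap
    (map_withDensity_comp_sub_of_map_add μ ν hπ hmap hπv)

end Translation

/-- Superadditivity of the L1-Fisher information (Theorem `l1_super`):
the sum of the L1-Fisher informations of the coordinate marginals is bounded by
the sum of the directional L1-Fisher informations along the standard basis. -/
theorem l1Fisher_superadditive
    (n : ℕ)
    (f : EuclideanSpace ℝ (Fin n) → ℝ) (hf0 : ∀ x, 0 ≤ f x)
    (hfm : Measurable f) (hf1 : ∫ x, f x = 1)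
    (g : Fin n → ℝ → ℝ) (hg0 : ∀ i t, 0 ≤ g i t) (hgm : ∀ i, Measurable (g i))
    (hg : ∀ i, Measure.map (fun x : EuclideanSpace ℝ (Fin n) => x i)
        (volume.withDensity (fun x => ENNReal.ofReal (f x)))
      = volume.withDensity (fun t => ENNReal.ofReal (g i t)))
    (I J : Fin n → ℝ)
    (hI : ∀ i, Tendsto (fun ε : ℝ => (1 / ε) * ∫ t : ℝ, |g i t - g i (t - ε)|)
      (𝓝[>] (0 : ℝ)) (𝓝 (I i)))
    (hJ : ∀ i, Tendsto (fun ε : ℝ =>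
        (1 / ε) * ∫ x : EuclideanSpace ℝ (Fin n), |f x - f (x - ε • EuclideanSpace.single i 1)|)
      (𝓝[>] (0 : ℝ)) (𝓝 (J i))) :
    ∑ i, I i ≤ ∑ i, J i := by
  refine Finset.sum_le_sum fun i _ => le_of_tendsto_of_tendsto (hI i) (hJ i) ?_
  filter_upwards [self_mem_nhdsWithin] with ε (hε : 0 < ε)
  have hπ : Measurable fun x : EuclideanSpace ℝ (Fin n) => x i := by fun_prop
  refine mul_le_mul_of_nonneg_left ?_ (one_div_nonneg.mpr hε.le)
  exact integral_abs_sub_comp_sub_le_of_map_withDensity volume volume hπ hf0 hfm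
    (integrable_of_integral_eq_one hf1) (hg0 i) (hgm i) (hg i) fun x => by simp
end

section
/- Let N ≥ 1 be an integer, τ > 0 a real number, and let [a_1,b_1],…,[a_N,b_N] be N pairwise disjoint closed intervals in ℝ with a_i < b_i for each i. Let f : ℝ → [0,∞) be the function with f(x) = τ for x ∈ ∪_{i=1}^N [a_i,b_i] and f(x) = 0 otherwise, and suppose f is a probability density, i.e., τ · ∑_{i=1}^N (b_i − a_i) = 1. Then the limit I_1 = lim_{ε→0⁺} (1/ε) ∫_ℝ |f(x) − f(x−ε)| dx exists and equals 2Nτ. -/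
open MeasureTheory Filter Topology

/-!
Write `A = ⋃ i, [a i, b i]`. Then `|f x - f (x - ε)|` is `τ` times the indicator of `A ∆ (A + ε)`,
and since `A` and `A + ε` have the same finite measure, `|A ∆ (A + ε)| = 2 |A \ (A + ε)|`. Once `ε`
is smaller than every interval length and every gap, `A \ (A + ε)` is the disjoint union of the `N`
strips `[a i, a i + ε)`, so the integral equals `2 N τ ε` for all small `ε`.
-/

open Set Function
open scoped symmDiff ENNReal

theorem integral_abs_indicator_sub_indicator {α : Type*} [MeasurableSpace α] (μ : Measure α)
    {s t : Set α} (hst : MeasurableSet (s ∆ t)) (c : ℝ) :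
    ∫ x, |s.indicator (fun _ => c) x - t.indicator (fun _ => c) x| ∂μ = μ.real (s ∆ t) * |c| := by
  simp_rw [← abs_indicator_symmDiff]
  rw [← smul_eq_mul, ← integral_indicator_const _ hst]
  congr with x
  by_cases hx : x ∈ s ∆ t <;> simp [hx]

theorem measureReal_symmDiff_eq_two_mul_of_measure_eq {α : Type*} [MeasurableSpace α]
    {μ : Measure α} {s t : Set α} (hs : MeasurableSet s) (ht : MeasurableSet t)
    (h : μ s = μ t) (hμs : μ s ≠ ∞) :
    μ.real (s ∆ t) = 2 * μ.real (s \ t) := by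
  rw [measureReal_symmDiff_eq hs ht hμs (h ▸ hμs), measureReal_def, measureReal_def,
    measure_sdiff_symm hs.nullMeasurableSet ht.nullMeasurableSet h
      (measure_ne_top_of_subset inter_subset_left hμs)]
  ring

theorem integral_abs_indicator_sub_indicator_sub {G : Type*} [MeasurableSpace G] [AddGroup G]
    [MeasurableAdd G] (μ : Measure G) [μ.IsAddRightInvariant] {s : Set G} (hs : MeasurableSet s)
    (hμs : μ s ≠ ∞) (c : ℝ) (g : G) :
    ∫ x, |s.indicator (fun _ => c) x - s.indicator (fun _ => c) (x - g)| ∂μ =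
      2 * |c| * μ.real (s \ ((· - g) ⁻¹' s)) := by
  have hshift := measurePreserving_sub_right μ g
  have hs' : MeasurableSet ((· - g) ⁻¹' s) := hshift.measurable hs
  simp_rw [← indicator_comp_right (fun x => x - g) (g := fun _ => c), comp_def]
  rw [integral_abs_indicator_sub_indicator μ (hs.symmDiff hs'),
    measureReal_symmDiff_eq_two_mul_of_measure_eq hs hs'
      (hshift.measure_preimage hs.nullMeasurableSet).symm hμs]
  ring

section Intervals

variable {ι : Type*} {a b : ι → ℝ} {ε : ℝ}

theorem iUnion_Icc_diff_preimage_sub_eq_iUnion_Ico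
    (hdisj : Pairwise (Disjoint on fun i => Icc (a i) (b i))) (hε : 0 ≤ ε)
    (hlen : ∀ i, ε ≤ b i - a i) (hgap : ∀ i j, b j < a i → ε < a i - b j) :
    (⋃ i, Icc (a i) (b i)) \ ((· - ε) ⁻¹' ⋃ i, Icc (a i) (b i)) = ⋃ i, Ico (a i) (a i + ε) := by
  ext x
  simp only [Set.mem_sdiff, mem_iUnion, mem_preimage, mem_Icc, mem_Ico, not_exists, not_and]
  constructor
  · rintro ⟨⟨i, hax, hxb⟩, hshift⟩
    exact ⟨i, hax, lt_of_not_ge fun h => hshift i (by linarith) (by linarith)⟩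
  · rintro ⟨i, hax, hxa⟩
    refine ⟨⟨i, hax, by linarith [hlen i]⟩, fun j hj hjb => ?_⟩
    rcases lt_or_ge (b j) (a i) with hba | hab
    · linarith [hgap i j hba]
    · obtain rfl : j = i := hdisj.eq <|
        not_disjoint_iff.2 ⟨a i, ⟨by linarith, hab⟩, le_rfl, by linarith [hlen i]⟩
      linarith

theorem volume_real_iUnion_Ico [Fintype ι]
    (hdisj : Pairwise (Disjoint on fun i => Icc (a i) (b i)))
    (hε : 0 ≤ ε) (hlen : ∀ i, ε ≤ b i - a i) :
    volume.real (⋃ i, Ico (a i) (a i + ε)) = Fintype.card ι * ε := by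
  have hsub : ∀ i, Ico (a i) (a i + ε) ⊆ Icc (a i) (b i) := fun i =>
    Ico_subset_Icc_self.trans (Icc_subset_Icc_right (by linarith [hlen i]))
  rw [measureReal_iUnion_fintype (hdisj.mono fun i j h => h.mono (hsub i) (hsub j))
    (fun _ => measurableSet_Ico) fun _ => measure_Ico_lt_top.ne]
  simp [Real.volume_real_Ico, hε]

theorem integral_abs_indicator_iUnion_Icc_sub_shift [Fintype ι]
    (hdisj : Pairwise (Disjoint on fun i => Icc (a i) (b i)))
    (hε : 0 ≤ ε) (hlen : ∀ i, ε ≤ b i - a i) (hgap : ∀ i j, b j < a i → ε < a i - b j) (c : ℝ) :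
    ∫ x, |(⋃ i, Icc (a i) (b i)).indicator (fun _ => c) x -
      (⋃ i, Icc (a i) (b i)).indicator (fun _ => c) (x - ε)| = 2 * Fintype.card ι * |c| * ε := by
  rw [integral_abs_indicator_sub_indicator_sub volume
      (MeasurableSet.iUnion fun _ => measurableSet_Icc) ?_,
    iUnion_Icc_diff_preimage_sub_eq_iUnion_Ico hdisj hε hlen hgap,
    volume_real_iUnion_Ico hdisj hε hlen]
  · ring
  · exact ((measure_iUnion_fintype_le _ _).trans_lt
      (ENNReal.sum_lt_top.2 fun _ _ => measure_Icc_lt_top)).ne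

theorem eventually_le_lengths_and_lt_gaps [Finite ι] (hab : ∀ i, a i < b i) :
    ∀ᶠ ε in 𝓝[>] (0 : ℝ),
      0 < ε ∧ (∀ i, ε ≤ b i - a i) ∧ ∀ i j, b j < a i → ε < a i - b j := by
  refine eventually_mem_nhdsWithin.and (nhdsWithin_le_nhds
    ((eventually_all.2 fun i => ?_).and (eventually_all.2 fun i => eventually_all.2 fun j => ?_)))
  · exact eventually_le_nhds (sub_pos.2 (hab i))
  · by_cases hba : b j < a i
    · exact (eventually_lt_nhds (sub_pos.2 hba)).mono fun _ hε _ => hε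
    · exact Eventually.of_forall fun _ h => absurd h hba

end Intervals

theorem l1Fisher_step_function_general
    (N : ℕ) (τ : ℝ) (hτ : 0 < τ)
    (a b : Fin N → ℝ) (hab : ∀ i, a i < b i)
    (hdisj : ∀ i j, i ≠ j → Disjoint (Set.Icc (a i) (b i)) (Set.Icc (a j) (b j)))
    (f : ℝ → ℝ)
    (hf : ∀ x, f x = (⋃ i, Set.Icc (a i) (b i)).indicator (fun _ => τ) x) :
    Tendsto (fun ε : ℝ => (1 / ε) * ∫ x : ℝ, |f x - f (x - ε)|) (𝓝[>] (0 : ℝ))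
      (𝓝 (2 * N * τ)) := by
  refine tendsto_const_nhds.congr' ((eventually_le_lengths_and_lt_gaps hab).mono ?_)
  rintro ε ⟨hε, hlen, hgap⟩
  simp only [hf]
  rw [integral_abs_indicator_iUnion_Icc_sub_shift (fun i j => hdisj i j) hε.le hlen hgap,
    Fintype.card_fin, abs_of_pos hτ]
  field_simp

/-- Corollary `step function`: the L1-Fisher information of the uniform density on a
disjoint union of `N` closed intervals with common height `τ` exists and equals `2 N τ`. -/
theorem l1Fisher_step_function
    (N : ℕ) (hN : 1 ≤ N) (τ : ℝ) (hτ : 0 < τ)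
    (a b : Fin N → ℝ) (hab : ∀ i, a i < b i)
    (hdisj : ∀ i j, i ≠ j → Disjoint (Set.Icc (a i) (b i)) (Set.Icc (a j) (b j)))
    (f : ℝ → ℝ)
    (hf : ∀ x, f x = (⋃ i, Set.Icc (a i) (b i)).indicator (fun _ => τ) x)
    (hprob : τ * ∑ i, (b i - a i) = 1) :
    Tendsto (fun ε : ℝ => (1 / ε) * ∫ x : ℝ, |f x - f (x - ε)|) (𝓝[>] (0 : ℝ))
      (𝓝 (2 * N * τ)) :=
  l1Fisher_step_function_general N τ hτ a b hab hdisj f hf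
end

section
/- Let f : ℝ → [0,∞) be a probability density with respect to Lebesgue measure which is unimodal: there exists m ∈ ℝ such that f is nondecreasing on (−∞,m] and nonincreasing on [m,∞). Suppose moreover that f is piecewise continuous: there exist finitely many points −∞ = a_0 < a_1 < … < a_M < a_{M+1} = ∞ such that f is continuous on each open interval (a_i, a_{i+1}) and has finite one-sided limits at each a_i for 1 ≤ i ≤ M. Then the limit I_1 = lim_{ε→0⁺} (1/ε) ∫_ℝ |f(x) − f(x−ε)| dx exists and equals 2‖f‖_∞, where ‖f‖_∞ denotes the essential supremum of f with respect to Lebesgue measure. -/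
/-!
Write `|a - b| = 2 max a b - (a + b)`. If `f` is unimodal about `m`, then `max (f x) (f (x - ε))`
is `f x` on `(-∞, m]` and `f (x - ε)` on `(m + ε, ∞)`, so these two pieces integrate to `∫ f`, and
`∫ |f x - f (x - ε)| dx = 2 ∫_{(m, m + ε]} max (f x) (f (x - ε)) dx`. By monotonicity `f` has
one-sided limits `f (m⁻)` and `f (m⁺)`, so the average over `(m, m + ε]` tends to
`max (f (m⁻)) (f (m⁺))`, which is the essential supremum of `f`.
-/

open MeasureTheory Filter Topology Set

theorem abs_sub_eq_two_mul_max_sub_add (a b : ℝ) : |a - b| = 2 * max a b - (a + b) := by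
  linarith [max_sub_min_eq_abs' a b, min_add_max a b]

theorem setIntegral_Ioi_comp_sub_right {E : Type*} [NormedAddCommGroup E] [NormedSpace ℝ E]
    (f : ℝ → E) (a d : ℝ) : ∫ x in Ioi (a + d), f (x - d) = ∫ x in Ioi a, f x := by
  rw [← preimage_sub_const_Ioi, (measurePreserving_sub_right volume d).setIntegral_preimage_emb
    (measurableEmbedding_subRight d)]

theorem tendsto_Ioo_add_nhdsGT_smallSets (c : ℝ) :
    Tendsto (fun ε ↦ Ioo c (c + ε)) (𝓝[>] 0) (𝓝[>] c).smallSets := by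
  refine tendsto_smallSets_iff.2 fun t ht ↦ ?_
  obtain ⟨u, hu, hsub⟩ := mem_nhdsGT_iff_exists_Ioo_subset.1 ht
  filter_upwards [Ioo_mem_nhdsGT (sub_pos.2 hu)] with ε hε
  exact (Ioo_subset_Ioo_right (by linarith [hε.2])).trans hsub

theorem tendsto_Ioo_sub_nhdsLT_smallSets (c : ℝ) :
    Tendsto (fun ε ↦ Ioo (c - ε) c) (𝓝[>] 0) (𝓝[<] c).smallSets := by
  refine tendsto_smallSets_iff.2 fun t ht ↦ ?_
  obtain ⟨u, hu, hsub⟩ := mem_nhdsLT_iff_exists_Ioo_subset.1 ht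
  filter_upwards [Ioo_mem_nhdsGT (sub_pos.2 hu)] with ε hε
  exact (Ioo_subset_Ioo_left (by linarith [hε.2])).trans hsub

theorem tendsto_inv_mul_setIntegral_Ioc {G : ℝ → ℝ → ℝ} {c L : ℝ}
    (hint : ∀ ε > 0, IntegrableOn (G ε) (Ioc c (c + ε)))
    (hG : ∀ η > 0, ∀ᶠ ε in 𝓝[>] 0, ∀ x ∈ Ioo c (c + ε), |G ε x - L| ≤ η) :
    Tendsto (fun ε ↦ ε⁻¹ * ∫ x in Ioc c (c + ε), G ε x) (𝓝[>] 0) (𝓝 L) := by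
  refine Metric.tendsto_nhds.2 fun η hη ↦ ?_
  filter_upwards [hG (η / 2) (half_pos hη), self_mem_nhdsWithin] with ε hG (hε : 0 < ε)
  have hvol : volume.real (Ioo c (c + ε)) = ε := by
    rw [Real.volume_real_Ioo_of_le (by linarith), add_sub_cancel_left]
  have hcentered : (∫ x in Ioc c (c + ε), G ε x) - ε * L = ∫ x in Ioo c (c + ε), (G ε x - L) := by
    rw [integral_Ioc_eq_integral_Ioo, integral_sub ((hint ε hε).mono_set Ioo_subset_Ioc_self)
      (integrableOn_const measure_Ioo_lt_top.ne), setIntegral_const, hvol, smul_eq_mul]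
  have hbound : |∫ x in Ioo c (c + ε), (G ε x - L)| ≤ η / 2 * ε := by
    simpa [hvol] using norm_setIntegral_le_of_norm_le_const (f := fun x ↦ G ε x - L)
      (μ := volume) measure_Ioo_lt_top hG
  rw [Real.dist_eq, show (ε⁻¹ * ∫ x in Ioc c (c + ε), G ε x) - L
      = ε⁻¹ * ((∫ x in Ioc c (c + ε), G ε x) - ε * L) by field_simp, hcentered, abs_mul,
    abs_of_pos (inv_pos.2 hε)]
  calc ε⁻¹ * |∫ x in Ioo c (c + ε), (G ε x - L)| ≤ ε⁻¹ * (η / 2 * ε) := by gcongr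
    _ = η / 2 := by field_simp
    _ < η := half_lt_self hη

section EssSup

variable {α β : Type*} [MeasurableSpace α] {μ : Measure α}

theorem nhdsWithin_inf_ae_neBot [TopologicalSpace α] [μ.IsOpenPosMeasure] {s : Set α}
    (hs : IsOpen s) (x : α) [(𝓝[s] x).NeBot] : (𝓝[s] x ⊓ ae μ).NeBot := by
  refine inf_neBot_iff_frequently_left.2 fun {p} hp ↦ ?_
  obtain ⟨u, hu, hxu, hsub⟩ := mem_nhdsWithin.1 hp
  have hne : (u ∩ s).Nonempty := Filter.nonempty_of_mem
    (inter_mem (mem_nhdsWithin_of_mem_nhds (hu.mem_nhds hxu)) self_mem_nhdsWithin)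
  exact frequently_ae_iff.2 fun h ↦ (hu.inter hs).measure_ne_zero μ hne (measure_mono_null hsub h)

theorem le_essSup_of_tendsto [ConditionallyCompleteLinearOrder β] [TopologicalSpace β]
    [FirstCountableTopology β] [OrderTopology β] {F : Filter α} [(F ⊓ ae μ).NeBot] {f : α → β}
    {L : β} (hf : IsBoundedUnder (· ≤ ·) (ae μ) f) (h : Tendsto f F (𝓝 L)) :
    L ≤ essSup f μ := by
  by_contra! hlt
  obtain ⟨x, hgt, hle⟩ := (((h.eventually (lt_mem_nhds hlt)).filter_mono inf_le_left).and
    ((ae_le_essSup hf).filter_mono inf_le_right)).exists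
  exact hgt.not_ge hle

end EssSup

section Unimodal

variable {f : ℝ → ℝ} {m l r : ℝ}

theorem MonotoneOn.le_of_tendsto_nhdsLT (hf : MonotoneOn f (Iic m))
    (hl : Tendsto f (𝓝[<] m) (𝓝 l)) {x : ℝ} (hx : x < m) : f x ≤ l :=
  ge_of_tendsto hl <| by
    filter_upwards [Ioo_mem_nhdsLT hx] with y hy using hf hx.le hy.2.le hy.1.le

theorem AntitoneOn.le_of_tendsto_nhdsGT (hf : AntitoneOn f (Ici m))
    (hr : Tendsto f (𝓝[>] m) (𝓝 r)) {x : ℝ} (hx : m < x) : f x ≤ r :=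
  ge_of_tendsto hr <| by
    filter_upwards [Ioo_mem_nhdsGT hx] with y hy using hf hy.1.le hx.le hy.2.le

theorem essSup_eq_max_of_unimodal (hf0 : ∀ x, 0 ≤ f x) (hmono : MonotoneOn f (Iic m))
    (hanti : AntitoneOn f (Ici m)) (hl : Tendsto f (𝓝[<] m) (𝓝 l))
    (hr : Tendsto f (𝓝[>] m) (𝓝 r)) : essSup f volume = max l r := by
  have hle : ∀ᵐ x, f x ≤ max l r := by
    filter_upwards [Measure.ae_ne volume m] with x hx
    rcases hx.lt_or_gt with h | h
    · exact le_max_of_le_left (hmono.le_of_tendsto_nhdsLT hl h)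
    · exact le_max_of_le_right (hanti.le_of_tendsto_nhdsGT hr h)
  have hbdd : IsBoundedUnder (· ≤ ·) (ae volume) f := isBoundedUnder_of_eventually_le hle
  have := nhdsWithin_inf_ae_neBot (μ := volume) (isOpen_Iio (a := m)) m
  have := nhdsWithin_inf_ae_neBot (μ := volume) (isOpen_Ioi (a := m)) m
  exact le_antisymm (essSup_le_of_ae_le _ hle (isCoboundedUnder_le_of_le _ hf0))
    (max_le (le_essSup_of_tendsto hbdd hl) (le_essSup_of_tendsto hbdd hr))

theorem integral_max_comp_sub_of_unimodal (hf : Integrable f) (hmono : MonotoneOn f (Iic m))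
    (hanti : AntitoneOn f (Ici m)) {ε : ℝ} (hε : 0 ≤ ε) :
    ∫ x, max (f x) (f (x - ε)) = (∫ x, f x) + ∫ x in Ioc m (m + ε), max (f x) (f (x - ε)) := by
  have hmax : Integrable (fun x ↦ max (f x) (f (x - ε))) := hf.sup (hf.comp_sub_right ε)
  have hleft : ∫ x in Iic m, max (f x) (f (x - ε)) = ∫ x in Iic m, f x :=
    setIntegral_congr_fun measurableSet_Iic fun x (hx : x ≤ m) ↦
      max_eq_left (hmono (by linarith : x - ε ≤ m) hx (by linarith))
  have hright : ∫ x in Ioi (m + ε), max (f x) (f (x - ε)) = ∫ x in Ioi m, f x := by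
    rw [← setIntegral_Ioi_comp_sub_right f m ε]
    exact setIntegral_congr_fun measurableSet_Ioi fun x (hx : m + ε < x) ↦
      max_eq_right (hanti (by linarith : m ≤ x - ε) (by linarith : m ≤ x) (by linarith))
  have hmid := intervalIntegral.integral_interval_add_Ioi (a := m) (b := m + ε)
    hmax.integrableOn hmax.integrableOn
  rw [intervalIntegral.integral_of_le (by linarith), hright] at hmid
  rw [← intervalIntegral.integral_Iic_add_Ioi hmax.integrableOn hmax.integrableOn,
    ← intervalIntegral.integral_Iic_add_Ioi hf.integrableOn hf.integrableOn, hleft, ← hmid]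
  ring

theorem integral_abs_sub_comp_sub_of_unimodal (hf : Integrable f) (hmono : MonotoneOn f (Iic m))
    (hanti : AntitoneOn f (Ici m)) {ε : ℝ} (hε : 0 ≤ ε) :
    ∫ x, |f x - f (x - ε)| = 2 * ∫ x in Ioc m (m + ε), max (f x) (f (x - ε)) := by
  have hfε : Integrable (fun x ↦ f (x - ε)) := hf.comp_sub_right ε
  have hmax : Integrable (fun x ↦ max (f x) (f (x - ε))) := hf.sup hfε
  have hsum : Integrable (fun x ↦ f x + f (x - ε)) := hf.add hfε
  simp_rw [abs_sub_eq_two_mul_max_sub_add]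
  rw [integral_sub (hmax.const_mul 2) hsum, integral_const_mul,
    integral_add hf hfε, integral_sub_right_eq_self,
    integral_max_comp_sub_of_unimodal hf hmono hanti hε]
  ring

theorem eventually_abs_max_comp_sub_sub_le (hl : Tendsto f (𝓝[<] m) (𝓝 l))
    (hr : Tendsto f (𝓝[>] m) (𝓝 r)) {η : ℝ} (hη : 0 < η) :
    ∀ᶠ ε in 𝓝[>] 0, ∀ x ∈ Ioo m (m + ε), |max (f x) (f (x - ε)) - max r l| ≤ η := by
  filter_upwards [tendsto_smallSets_iff.1 (tendsto_Ioo_add_nhdsGT_smallSets m) _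
      (hr (Metric.closedBall_mem_nhds r hη)),
    tendsto_smallSets_iff.1 (tendsto_Ioo_sub_nhdsLT_smallSets m) _
      (hl (Metric.closedBall_mem_nhds l hη))] with ε hεr hεl x hx
  have hfx : |f x - r| ≤ η := hεr hx
  have hfxε : |f (x - ε) - l| ≤ η := hεl ⟨by linarith [hx.1], by linarith [hx.2]⟩
  exact (abs_max_sub_max_le_max _ _ _ _).trans (max_le hfx hfxε)

end Unimodal

theorem l1Fisher_unimodal_general
    (f : ℝ → ℝ) (hf0 : ∀ x, 0 ≤ f x) (hf1 : ∫ x, f x = 1)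
    (hunimodal : ∃ m : ℝ, MonotoneOn f (Set.Iic m) ∧ AntitoneOn f (Set.Ici m)) :
    Tendsto (fun ε : ℝ => (1 / ε) * ∫ x : ℝ, |f x - f (x - ε)|) (𝓝[>] (0 : ℝ))
      (𝓝 (2 * essSup f volume)) := by
  obtain ⟨m, hmono, hanti⟩ := hunimodal
  have hf : Integrable f := Integrable.of_integral_ne_zero (by rw [hf1]; exact one_ne_zero)
  have hl := (hmono.mono Iio_subset_Iic_self).tendsto_nhdsLT
    (hmono.map_bddAbove Iio_subset_Iic_self ⟨m, fun _ hx ↦ hx.le, le_refl m⟩)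
  have hr := (hanti.mono Ioi_subset_Ici_self).tendsto_nhdsGT
    (hanti.map_bddBelow Ioi_subset_Ici_self ⟨m, fun _ hx ↦ hx.le, le_refl m⟩)
  rw [essSup_eq_max_of_unimodal hf0 hmono hanti hl hr, max_comm]
  have hmax := tendsto_inv_mul_setIntegral_Ioc (G := fun ε x ↦ max (f x) (f (x - ε)))
    (fun ε _ ↦ (hf.sup (hf.comp_sub_right ε)).integrableOn)
    fun η hη ↦ eventually_abs_max_comp_sub_sub_le hl hr hη
  refine (hmax.const_mul 2).congr' ?_
  filter_upwards [self_mem_nhdsWithin] with ε (hε : 0 < ε)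
  rw [integral_abs_sub_comp_sub_of_unimodal hf hmono hanti hε.le]
  ring

/-- Corollary `I_1 for unimodal`: the L1-Fisher information of a unimodal, piecewise
continuous probability density on ℝ exists and equals twice its essential supremum. -/
theorem l1Fisher_unimodal
    (f : ℝ → ℝ) (hf0 : ∀ x, 0 ≤ f x) (hfm : Measurable f) (hf1 : ∫ x, f x = 1)
    (hunimodal : ∃ m : ℝ, MonotoneOn f (Set.Iic m) ∧ AntitoneOn f (Set.Ici m))
    (M : ℕ) (a : Fin M → ℝ) (ha : StrictMono a)
    (hcont : ∀ i : Fin (M + 1), ContinuousOn f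
      {x : ℝ | (∀ j : Fin M, (j : ℕ) < (i : ℕ) → a j < x) ∧
               (∀ j : Fin M, (i : ℕ) ≤ (j : ℕ) → x < a j)})
    (hlim : ∀ i : Fin M,
      (∃ l : ℝ, Tendsto f (𝓝[<] (a i)) (𝓝 l)) ∧
      (∃ r : ℝ, Tendsto f (𝓝[>] (a i)) (𝓝 r))) :
    Tendsto (fun ε : ℝ => (1 / ε) * ∫ x : ℝ, |f x - f (x - ε)|) (𝓝[>] (0 : ℝ))
      (𝓝 (2 * essSup f volume)) :=
  l1Fisher_unimodal_general f hf0 hf1 hunimodal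
end

section
/- Let f : ℝ → [0,∞) be a probability density with respect to Lebesgue measure, and suppose there exist points −∞ = a_0 < a_1 < … < a_M < a_{M+1} = ∞ such that f is continuous and monotone (nondecreasing or nonincreasing) on each open interval (a_i, a_{i+1}) and the one-sided limits f(a_i⁺) and f(a_i⁻) exist and are finite for i = 1,…,M, so that the limit I_1 = lim_{ε→0⁺} (1/ε) ∫_ℝ |f(x) − f(x−ε)| dx exists. Let θ_1 < θ_2 < … < θ_N be real numbers such that f is continuous at each θ_i. Then I_1 ≥ |f(θ_1)| + ∑_{i=1}^{N−1} |f(θ_{i+1}) − f(θ_i)| + |f(θ_N)|. -/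
open MeasureTheory Filter Topology Set

/-! For `ε > 0` the primitive `t ↦ ∫_{-∞}^t (f x - f (x - ε)) dx = ∫_{t-ε}^t f` of an integrable
function with total integral zero vanishes at `±∞`, so its variation along any increasing sequence
of points, including the jumps from and back to `0`, is at most `∫ |f x - f (x - ε)| dx`. After
dividing by `ε`, the moving averages `(1/ε) ∫_{t-ε}^t f` converge to `f t` at every continuity
point as `ε → 0⁺`, and the bound passes to the limit. -/

/-- The variation of `u` along `θ 0 ≤ ⋯ ≤ θ n`, with `u` taken to vanish at `±∞`. -/
def sampledVariation (u : ℝ → ℝ) (θ : ℕ → ℝ) (n : ℕ) : ℝ :=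
  |u (θ 0)| + ∑ i ∈ Finset.range n, |u (θ (i + 1)) - u (θ i)| + |u (θ n)|

theorem sampledVariation_const_mul (c : ℝ) (u : ℝ → ℝ) (θ : ℕ → ℝ) (n : ℕ) :
    sampledVariation (fun t => c * u t) θ n = |c| * sampledVariation u θ n := by
  simp only [sampledVariation, ← mul_sub, abs_mul, mul_add, Finset.mul_sum]

theorem tendsto_sampledVariation {ι : Type*} {l : Filter ι} {u : ι → ℝ → ℝ} {v : ℝ → ℝ}
    {θ : ℕ → ℝ} {n : ℕ} (h : ∀ i ≤ n, Tendsto (fun k => u k (θ i)) l (𝓝 (v (θ i)))) :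
    Tendsto (fun k => sampledVariation (u k) θ n) l (𝓝 (sampledVariation v θ n)) := by
  refine (((h 0 n.zero_le).abs.add (tendsto_finsetSum _ fun i hi => ?_)).add (h n le_rfl).abs)
  have hi : i < n := Finset.mem_range.mp hi
  exact ((h (i + 1) hi).sub (h i hi.le)).abs

theorem setIntegral_Iic_comp_sub_right (f : ℝ → ℝ) (ε t : ℝ) :
    ∫ x in Iic t, f (x - ε) = ∫ x in Iic (t - ε), f x := by
  rw [← integral_indicator measurableSet_Iic, ← integral_indicator measurableSet_Iic,
    ← integral_sub_right_eq_self (fun x => (Iic (t - ε)).indicator f x) ε]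
  congr 1
  ext x
  simp only [indicator_apply, mem_Iic, sub_le_sub_iff_right]

theorem setIntegral_Iic_sub_comp_sub_right {f : ℝ → ℝ} (hf : Integrable f) (ε t : ℝ) :
    ∫ x in Iic t, (f x - f (x - ε)) = ∫ x in t - ε..t, f x := by
  rw [integral_sub hf.integrableOn (hf.comp_sub_right ε).integrableOn,
    setIntegral_Iic_comp_sub_right, intervalIntegral.integral_Iic_sub_Iic hf.integrableOn
      hf.integrableOn]

theorem sampledVariation_integral_Iic_le {g : ℝ → ℝ} (hg : Integrable g) (hg0 : ∫ x, g x = 0)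
    {θ : ℕ → ℝ} {n : ℕ} (hθ : ∀ i < n, θ i ≤ θ (i + 1)) :
    sampledVariation (fun t => ∫ x in Iic t, g x) θ n ≤ ∫ x, |g x| := by
  have hleft : |∫ x in Iic (θ 0), g x| ≤ ∫ x in Iic (θ 0), |g x| := abs_integral_le_integral_abs
  have hright : |∫ x in Iic (θ n), g x| ≤ ∫ x in Ioi (θ n), |g x| := by
    have hsplit := intervalIntegral.integral_Iic_add_Ioi (b := θ n) hg.integrableOn
      hg.integrableOn
    rw [hg0, add_eq_zero_iff_eq_neg] at hsplit
    rw [hsplit, abs_neg]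
    exact abs_integral_le_integral_abs
  have hmiddle : ∑ i ∈ Finset.range n,
      |(∫ x in Iic (θ (i + 1)), g x) - ∫ x in Iic (θ i), g x| ≤ ∫ x in θ 0..θ n, |g x| := by
    rw [← intervalIntegral.sum_integral_adjacent_intervals fun i _ =>
      hg.abs.intervalIntegrable]
    refine Finset.sum_le_sum fun i hi => ?_
    rw [intervalIntegral.integral_Iic_sub_Iic hg.integrableOn hg.integrableOn]
    exact intervalIntegral.abs_integral_le_integral_abs (hθ i (Finset.mem_range.mp hi))
  have htotal : (∫ x in Iic (θ 0), |g x|) + (∫ x in θ 0..θ n, |g x|) + ∫ x in Ioi (θ n), |g x|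
      = ∫ x, |g x| := by
    rw [← intervalIntegral.integral_Iic_sub_Iic hg.abs.integrableOn hg.abs.integrableOn,
      add_sub_cancel, intervalIntegral.integral_Iic_add_Ioi hg.abs.integrableOn
        hg.abs.integrableOn]
  simp only [sampledVariation]
  linarith

theorem tendsto_average_intervalIntegral_left {f : ℝ → ℝ} (hf : LocallyIntegrable f volume)
    {t : ℝ} (ht : ContinuousAt f t) :
    Tendsto (fun ε => (1 / ε) * ∫ x in t - ε..t, f x) (𝓝[>] 0) (𝓝 (f t)) := by
  have hG : HasDerivAt (fun u => ∫ x in u..t, f x) (-f t) (t - 0) := by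
    rw [sub_zero]
    exact intervalIntegral.integral_hasDerivAt_left
      ((hf.integrableOn_isCompact isCompact_uIcc).intervalIntegrable)
      hf.aestronglyMeasurable.stronglyMeasurableAtFilter ht
  have hH := (hG.comp 0 ((hasDerivAt_id 0).const_sub t)).tendsto_slope_zero_right
  simp only [mul_neg, mul_one, neg_neg, zero_add, sub_zero, Function.comp_def,
    intervalIntegral.integral_same, smul_eq_mul] at hH
  simpa only [one_div] using hH

theorem sampledVariation_average_le {f : ℝ → ℝ} (hf : Integrable f) {ε : ℝ} (hε : 0 < ε)
    {θ : ℕ → ℝ} {n : ℕ} (hθ : ∀ i < n, θ i ≤ θ (i + 1)) :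
    sampledVariation (fun t => (1 / ε) * ∫ x in t - ε..t, f x) θ n
      ≤ (1 / ε) * ∫ x, |f x - f (x - ε)| := by
  have hg0 : ∫ x, (f x - f (x - ε)) = 0 := by
    rw [integral_sub hf (hf.comp_sub_right ε), integral_sub_right_eq_self, sub_self]
  simp only [← setIntegral_Iic_sub_comp_sub_right hf, sampledVariation_const_mul,
    abs_of_pos (one_div_pos.mpr hε)]
  exact mul_le_mul_of_nonneg_left
    (sampledVariation_integral_Iic_le (hf.sub (hf.comp_sub_right ε)) hg0 hθ) (by positivity)

theorem l1Fisher_lower_bound_sampled_general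
    (f : ℝ → ℝ) (hf1 : ∫ x, f x = 1)
    (I₁ : ℝ)
    (hI₁ : Tendsto (fun ε : ℝ => (1 / ε) * ∫ x : ℝ, |f x - f (x - ε)|) (𝓝[>] (0 : ℝ))
      (𝓝 I₁))
    (N : ℕ) (hN : 1 ≤ N) (θ : ℕ → ℝ)
    (hθ : ∀ i j, i < j → j < N → θ i < θ j)
    (hθcont : ∀ i, i < N → ContinuousAt f (θ i)) :
    |f (θ 0)| + (∑ i ∈ Finset.range (N - 1), |f (θ (i + 1)) - f (θ i)|) + |f (θ (N - 1))|
      ≤ I₁ := by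
  have hf : Integrable f := integrable_of_integral_eq_one hf1
  have hθmono : ∀ i < N - 1, θ i ≤ θ (i + 1) := fun i hi =>
    (hθ i (i + 1) i.lt_succ_self (by omega)).le
  have hlim : Tendsto
      (fun ε => sampledVariation (fun t => (1 / ε) * ∫ x in t - ε..t, f x) θ (N - 1))
      (𝓝[>] 0) (𝓝 (sampledVariation f θ (N - 1))) :=
    tendsto_sampledVariation fun i hi =>
      tendsto_average_intervalIntegral_left hf.locallyIntegrable (hθcont i (by omega))
  exact le_of_tendsto_of_tendsto hlim hI₁
    (eventually_nhdsWithin_of_forall fun ε hε => sampledVariation_average_le hf hε hθmono)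

/-- Corollary `I_1 single var ineq`: lower bound on the L1-Fisher information of a
piecewise continuous, piecewise monotone density using its values at finitely many
continuity points `θ 0 < θ 1 < ⋯ < θ (N-1)`. -/
theorem l1Fisher_lower_bound_sampled
    (f : ℝ → ℝ) (hf0 : ∀ x, 0 ≤ f x) (hfm : Measurable f) (hf1 : ∫ x, f x = 1)
    (M : ℕ) (a : Fin M → ℝ) (ha : StrictMono a)
    (hcont : ∀ i : Fin (M + 1), ContinuousOn f
      {x : ℝ | (∀ j : Fin M, (j : ℕ) < (i : ℕ) → a j < x) ∧
               (∀ j : Fin M, (i : ℕ) ≤ (j : ℕ) → x < a j)})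
    (hmono : ∀ i : Fin (M + 1),
      MonotoneOn f
        {x : ℝ | (∀ j : Fin M, (j : ℕ) < (i : ℕ) → a j < x) ∧
                 (∀ j : Fin M, (i : ℕ) ≤ (j : ℕ) → x < a j)} ∨
      AntitoneOn f
        {x : ℝ | (∀ j : Fin M, (j : ℕ) < (i : ℕ) → a j < x) ∧
                 (∀ j : Fin M, (i : ℕ) ≤ (j : ℕ) → x < a j)})
    (hlim : ∀ i : Fin M,
      (∃ l : ℝ, Tendsto f (𝓝[<] (a i)) (𝓝 l)) ∧
      (∃ r : ℝ, Tendsto f (𝓝[>] (a i)) (𝓝 r)))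
    (I₁ : ℝ)
    (hI₁ : Tendsto (fun ε : ℝ => (1 / ε) * ∫ x : ℝ, |f x - f (x - ε)|) (𝓝[>] (0 : ℝ))
      (𝓝 I₁))
    (N : ℕ) (hN : 1 ≤ N) (θ : ℕ → ℝ)
    (hθ : ∀ i j, i < j → j < N → θ i < θ j)
    (hθcont : ∀ i, i < N → ContinuousAt f (θ i)) :
    |f (θ 0)| + (∑ i ∈ Finset.range (N - 1), |f (θ (i + 1)) - f (θ i)|) + |f (θ (N - 1))|
      ≤ I₁ :=
  l1Fisher_lower_bound_sampled_general f hf1 I₁ hI₁ N hN θ hθ hθcont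
end

section
/- Let a < b be real numbers and let f : ℝ → ℝ be continuous and monotone (nondecreasing or nonincreasing) on the open interval (a,b), with finite one-sided limits f(a⁺) = lim_{x→a⁺} f(x) and f(b⁻) = lim_{x→b⁻} f(x). Then lim_{ε→0⁺} (1/ε) ∫_{a+ε}^{b} |f(x) − f(x−ε)| dx = |f(b⁻) − f(a⁺)|. -/
/-!
For `f` monotone on `(a, b)` and `0 < ε < b - a`, the integrand is `f x - f (x - ε) ≥ 0`, so the
integral telescopes to `∫_{b-ε}^b f - ∫_a^{a+ε} f`. By monotonicity these averages over shrinking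
end intervals are squeezed between `f (b - ε)` and `B`, resp. `A` and `f (a + ε)`, hence tend to
`B` and `A`. To have integrable functions throughout, `f` is replaced by its extension by the
constants `A` and `B` outside `(a, b)`, which is monotone on all of `ℝ`. The antitone case follows
from `-f`.
-/

open MeasureTheory Filter Topology Set

section Bounds

variable {α β : Type*} [LinearOrder α] [TopologicalSpace α] [OrderTopology α] [DenselyOrdered α]
  [LinearOrder β] [TopologicalSpace β] [OrderClosedTopology β] {f : α → β} {a b x : α}

theorem MonotoneOn.le_of_tendsto_nhdsLT_s14 {B : β} (hf : MonotoneOn f (Ioo a b))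
    (hB : Tendsto f (𝓝[<] b) (𝓝 B)) (hx : x ∈ Ioo a b) : f x ≤ B := by
  have := nhdsLT_neBot_of_exists_lt ⟨x, hx.2⟩
  refine ge_of_tendsto hB ?_
  filter_upwards [Ioo_mem_nhdsLT hx.2] with y hy
  exact hf hx ⟨hx.1.trans hy.1, hy.2⟩ hy.1.le

theorem MonotoneOn.ge_of_tendsto_nhdsGT {A : β} (hf : MonotoneOn f (Ioo a b))
    (hA : Tendsto f (𝓝[>] a) (𝓝 A)) (hx : x ∈ Ioo a b) : A ≤ f x := by
  have := nhdsGT_neBot_of_exists_gt ⟨x, hx.1⟩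
  refine le_of_tendsto hA ?_
  filter_upwards [Ioo_mem_nhdsGT hx.1] with y hy
  exact hf ⟨hy.1, hy.2.trans hx.2⟩ hx hy.2.le

end Bounds

noncomputable def extendIoo (a b A B : ℝ) (f : ℝ → ℝ) (x : ℝ) : ℝ :=
  if x ≤ a then A else if x < b then f x else B

section extendIoo

variable {a b A B x : ℝ} {f : ℝ → ℝ}

theorem extendIoo_of_le (hx : x ≤ a) : extendIoo a b A B f x = A := if_pos hx

theorem extendIoo_of_mem (hx : x ∈ Ioo a b) : extendIoo a b A B f x = f x := by
  simp [extendIoo, not_le.2 hx.1, hx.2]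

theorem extendIoo_of_ge (hab : a < b) (hx : b ≤ x) : extendIoo a b A B f x = B := by
  simp [extendIoo, not_le.2 (hab.trans_le hx), not_lt.2 hx]

theorem monotone_extendIoo (hab : a < b) (hf : MonotoneOn f (Ioo a b))
    (hA : Tendsto f (𝓝[>] a) (𝓝 A)) (hB : Tendsto f (𝓝[<] b) (𝓝 B)) :
    Monotone (extendIoo a b A B f) := by
  have hAf : ∀ x ∈ Ioo a b, A ≤ f x := fun x hx => hf.ge_of_tendsto_nhdsGT hA hx
  have hfB : ∀ x ∈ Ioo a b, f x ≤ B := fun x hx => hf.le_of_tendsto_nhdsLT_s14 hB hx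
  have hAB : A ≤ B := by
    obtain ⟨c, hc⟩ := nonempty_Ioo.2 hab
    exact (hAf c hc).trans (hfB c hc)
  intro x y hxy
  simp only [extendIoo]
  split_ifs <;> first
    | rfl | linarith
    | exact hAf _ ⟨by linarith, by assumption⟩
    | exact hfB _ ⟨by linarith, by assumption⟩
    | exact hf ⟨by linarith, by linarith⟩ ⟨by linarith, by assumption⟩ hxy

theorem tendsto_extendIoo_nhdsGT (hab : a < b) (hA : Tendsto f (𝓝[>] a) (𝓝 A)) :
    Tendsto (extendIoo a b A B f) (𝓝[>] a) (𝓝 A) :=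
  hA.congr' <| eventuallyEq_of_mem (Ioo_mem_nhdsGT hab) fun _ hx => (extendIoo_of_mem hx).symm

theorem tendsto_extendIoo_nhdsLT (hab : a < b) (hB : Tendsto f (𝓝[<] b) (𝓝 B)) :
    Tendsto (extendIoo a b A B f) (𝓝[<] b) (𝓝 B) :=
  hB.congr' <| eventuallyEq_of_mem (Ioo_mem_nhdsLT hab) fun _ hx => (extendIoo_of_mem hx).symm

end extendIoo

namespace Monotone

variable {g : ℝ → ℝ}

theorem mul_le_intervalIntegral (hg : Monotone g) {u v : ℝ} (huv : u ≤ v) :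
    (v - u) * g u ≤ ∫ x in u..v, g x := by
  simpa using intervalIntegral.integral_mono_on (μ := volume) huv intervalIntegrable_const
    hg.intervalIntegrable fun x hx => hg hx.1

theorem intervalIntegral_le_mul (hg : Monotone g) {u v : ℝ} (huv : u ≤ v) :
    ∫ x in u..v, g x ≤ (v - u) * g v := by
  simpa using intervalIntegral.integral_mono_on (μ := volume) huv hg.intervalIntegrable
    intervalIntegrable_const fun x hx => hg hx.2

theorem tendsto_inv_mul_intervalIntegral_sub_self (hg : Monotone g) {b : ℝ}
    (hb : Tendsto g (𝓝[<] b) (𝓝 (g b))) :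
    Tendsto (fun ε => ε⁻¹ * ∫ x in (b - ε)..b, g x) (𝓝[>] 0) (𝓝 (g b)) := by
  have h_shift : Tendsto (fun ε => b - ε) (𝓝[>] 0) (𝓝[<] b) := by
    refine tendsto_nhdsWithin_of_tendsto_nhds_of_eventually_within _ ?_ ?_
    · exact tendsto_nhdsWithin_of_tendsto_nhds (by simpa using (continuous_sub_left b).tendsto 0)
    · filter_upwards [self_mem_nhdsWithin] with ε (hε : 0 < ε)
      exact sub_lt_self b hε
  refine tendsto_of_tendsto_of_tendsto_of_le_of_le' (hb.comp h_shift) tendsto_const_nhds ?_ ?_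
  all_goals filter_upwards [self_mem_nhdsWithin] with ε (hε : 0 < ε)
  · rw [Function.comp_apply, le_inv_mul_iff₀ hε]
    simpa using hg.mul_le_intervalIntegral (sub_le_self b hε.le)
  · rw [inv_mul_le_iff₀ hε]
    simpa using hg.intervalIntegral_le_mul (sub_le_self b hε.le)

theorem tendsto_inv_mul_intervalIntegral_self_add (hg : Monotone g) {a : ℝ}
    (ha : Tendsto g (𝓝[>] a) (𝓝 (g a))) :
    Tendsto (fun ε => ε⁻¹ * ∫ x in a..(a + ε), g x) (𝓝[>] 0) (𝓝 (g a)) := by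
  have h_shift : Tendsto (fun ε => a + ε) (𝓝[>] 0) (𝓝[>] a) := by
    refine tendsto_nhdsWithin_of_tendsto_nhds_of_eventually_within _ ?_ ?_
    · exact tendsto_nhdsWithin_of_tendsto_nhds (by simpa using (continuous_const_add a).tendsto 0)
    · filter_upwards [self_mem_nhdsWithin] with ε (hε : 0 < ε)
      exact lt_add_of_pos_right a hε
  refine tendsto_of_tendsto_of_tendsto_of_le_of_le' tendsto_const_nhds (ha.comp h_shift) ?_ ?_
  all_goals filter_upwards [self_mem_nhdsWithin] with ε (hε : 0 < ε)
  · rw [le_inv_mul_iff₀ hε]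
    simpa using hg.mul_le_intervalIntegral (le_add_of_nonneg_right hε.le)
  · rw [Function.comp_apply, inv_mul_le_iff₀ hε]
    simpa using hg.intervalIntegral_le_mul (le_add_of_nonneg_right hε.le)

end Monotone

theorem intervalIntegral_sub_comp_sub_right {g : ℝ → ℝ}
    (hg : ∀ u v, IntervalIntegrable g volume u v) (a b ε : ℝ) :
    ∫ x in (a + ε)..b, (g x - g (x - ε)) = (∫ x in (b - ε)..b, g x) - ∫ x in a..(a + ε), g x := by
  have hg_shift : IntervalIntegrable (fun x => g (x - ε)) volume (a + ε) b := by
    simpa using (hg a (b - ε)).comp_sub_right ε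
  rw [intervalIntegral.integral_sub (hg _ _) hg_shift,
    intervalIntegral.integral_comp_sub_right, add_sub_cancel_right,
    intervalIntegral.integral_interval_sub_interval_comm' (hg _ _) (hg _ _) (hg _ _)]

theorem MonotoneOn.tendsto_inv_mul_intervalIntegral_abs_sub_comp_sub {a b A B : ℝ} {f : ℝ → ℝ}
    (hab : a < b) (hf : MonotoneOn f (Ioo a b))
    (hA : Tendsto f (𝓝[>] a) (𝓝 A)) (hB : Tendsto f (𝓝[<] b) (𝓝 B)) :
    Tendsto (fun ε : ℝ => (1 / ε) * ∫ x in (a + ε)..b, |f x - f (x - ε)|)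
      (𝓝[>] 0) (𝓝 |B - A|) := by
  set g := extendIoo a b A B f
  have hg : Monotone g := monotone_extendIoo hab hf hA hB
  have hgf : EqOn g f (Ioo a b) := fun _ hx => extendIoo_of_mem hx
  have hgA : g a = A := extendIoo_of_le le_rfl
  have hgB : g b = B := extendIoo_of_ge hab le_rfl
  have h_eq : ∀ᶠ ε in 𝓝[>] (0 : ℝ),
      ε⁻¹ * (∫ x in (b - ε)..b, g x) - ε⁻¹ * ∫ x in a..(a + ε), g x =
        (1 / ε) * ∫ x in (a + ε)..b, |f x - f (x - ε)| := by
    filter_upwards [Ioo_mem_nhdsGT (sub_pos.2 hab)] with ε ⟨hε, hεb⟩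
    rw [← mul_sub, ← intervalIntegral_sub_comp_sub_right (fun _ _ => hg.intervalIntegrable),
      one_div]
    refine congrArg _ (intervalIntegral.integral_congr_uIoo fun x hx => ?_)
    rw [uIoo_of_le (by linarith)] at hx
    have hx₀ : x ∈ Ioo a b := ⟨by linarith [hx.1], hx.2⟩
    have hx₁ : x - ε ∈ Ioo a b := ⟨by linarith [hx.1], by linarith [hx.2]⟩
    rw [hgf hx₀, hgf hx₁, abs_of_nonneg (sub_nonneg.2 (hf hx₁ hx₀ (sub_le_self x hε.le)))]
  rw [abs_of_nonneg (sub_nonneg.2 (hgA ▸ hgB ▸ hg hab.le))]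
  refine Tendsto.congr' h_eq ?_
  have hgb : Tendsto g (𝓝[<] b) (𝓝 (g b)) := hgB ▸ tendsto_extendIoo_nhdsLT hab hB
  have hga : Tendsto g (𝓝[>] a) (𝓝 (g a)) := hgA ▸ tendsto_extendIoo_nhdsGT hab hA
  rw [← hgA, ← hgB]
  exact (hg.tendsto_inv_mul_intervalIntegral_sub_self hgb).sub
    (hg.tendsto_inv_mul_intervalIntegral_self_add hga)

theorem l1Fisher_monotone_interval_contribution_general
    (a b : ℝ) (hab : a < b) (f : ℝ → ℝ)
    (hmono : MonotoneOn f (Set.Ioo a b) ∨ AntitoneOn f (Set.Ioo a b))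
    (A B : ℝ)
    (hA : Tendsto f (𝓝[>] a) (𝓝 A))
    (hB : Tendsto f (𝓝[<] b) (𝓝 B)) :
    Tendsto (fun ε : ℝ => (1 / ε) * ∫ x in (a + ε)..b, |f x - f (x - ε)|)
      (𝓝[>] (0 : ℝ)) (𝓝 |B - A|) := by
  rcases hmono with hf | hf
  · exact hf.tendsto_inv_mul_intervalIntegral_abs_sub_comp_sub hab hA hB
  · have h := hf.neg.tendsto_inv_mul_intervalIntegral_abs_sub_comp_sub hab hA.neg hB.neg
    simpa only [neg_sub_neg, abs_sub_comm] using h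

/-- Contribution of one interval of monotonicity to the L1-Fisher information:
`lim_{ε→0+} (1/ε) ∫_{a+ε}^{b} |f(x) − f(x−ε)| dx = |f(b⁻) − f(a⁺)|`. -/
theorem l1Fisher_monotone_interval_contribution
    (a b : ℝ) (hab : a < b) (f : ℝ → ℝ)
    (hcont : ContinuousOn f (Set.Ioo a b))
    (hmono : MonotoneOn f (Set.Ioo a b) ∨ AntitoneOn f (Set.Ioo a b))
    (A B : ℝ)
    (hA : Tendsto f (𝓝[>] a) (𝓝 A))
    (hB : Tendsto f (𝓝[<] b) (𝓝 B)) :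
    Tendsto (fun ε : ℝ => (1 / ε) * ∫ x in (a + ε)..b, |f x - f (x - ε)|)
      (𝓝[>] (0 : ℝ)) (𝓝 |B - A|) :=
  l1Fisher_monotone_interval_contribution_general a b hab f hmono A B hA hB
end

section
/- Let a ∈ ℝ and δ > 0, and let f : ℝ → ℝ be continuous and monotone (nondecreasing or nonincreasing) on each of the open intervals (a−δ, a) and (a, a+δ), with finite one-sided limits f(a⁻) = lim_{x→a⁻} f(x) and f(a⁺) = lim_{x→a⁺} f(x). Then lim_{ε→0⁺} (1/ε) ∫_{a}^{a+ε} |f(x) − f(x−ε)| dx = |f(a⁺) − f(a⁻)|. -/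
/-!
On `(a, a + ε)` the point `x` lies to the right of `a` and `x - ε` to its left, both within `ε`.
So as `ε → 0⁺` the integrand `|f x - f (x - ε)|` converges to `|f(a⁺) - f(a⁻)|` uniformly on
`(a, a + ε)`, and the average of a function that is uniformly close to a constant is close to
that constant.
-/

open MeasureTheory Filter Topology Set

lemma abs_inv_mul_intervalIntegral_sub_le {h : ℝ → ℝ} {a b c η : ℝ} (hab : a < b)
    (hmeas : AEStronglyMeasurable h (volume.restrict (Ioo a b)))
    (hbound : ∀ x ∈ Ioo a b, |h x - c| ≤ η) :
    |(b - a)⁻¹ * (∫ x in a..b, h x) - c| ≤ η := by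
  have hba : 0 < b - a := sub_pos.2 hab
  have hint : IntervalIntegrable h volume a b := by
    rw [intervalIntegrable_iff_integrableOn_Ioo_of_le hab.le]
    refine IntegrableOn.of_bound measure_Ioo_lt_top hmeas (|c| + η) ?_
    filter_upwards [ae_restrict_mem measurableSet_Ioo] with x hx
    linarith [abs_sub_abs_le_abs_sub (h x) c, hbound x hx, Real.norm_eq_abs (h x)]
  have hdev : |∫ x in a..b, (h x - c)| ≤ η * (b - a) := by
    have := intervalIntegral.norm_integral_le_of_norm_le_const_ae (f := fun x => h x - c)
      (a := a) (b := b) (C := η) <| by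
        filter_upwards [volume.ae_ne b] with x hxb hx
        rw [uIoc_of_le hab.le] at hx
        exact hbound x ⟨hx.1, lt_of_le_of_ne hx.2 hxb⟩
    rwa [abs_of_pos hba] at this
  have hsplit : ∫ x in a..b, (h x - c) = (∫ x in a..b, h x) - (b - a) * c := by
    rw [intervalIntegral.integral_sub hint intervalIntegrable_const,
      intervalIntegral.integral_const, smul_eq_mul]
  have hcenter : (b - a)⁻¹ * (∫ x in a..b, h x) - c = (b - a)⁻¹ * ∫ x in a..b, (h x - c) := by
    rw [hsplit]
    field_simp
  rw [hcenter, abs_mul, abs_of_pos (inv_pos.2 hba), inv_mul_le_iff₀ hba]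
  linarith

lemma tendsto_inv_mul_intervalIntegral_of_uniform {g : ℝ → ℝ → ℝ} {a c : ℝ}
    (hmeas : ∀ᶠ ε in 𝓝[>] 0, AEStronglyMeasurable (g ε) (volume.restrict (Ioo a (a + ε))))
    (hunif : ∀ η > 0, ∀ᶠ ε in 𝓝[>] 0, ∀ x ∈ Ioo a (a + ε), |g ε x - c| ≤ η) :
    Tendsto (fun ε => (1 / ε) * ∫ x in a..(a + ε), g ε x) (𝓝[>] 0) (𝓝 c) := by
  rw [Metric.tendsto_nhds]
  intro η hη
  filter_upwards [hmeas, hunif (η / 2) (half_pos hη), self_mem_nhdsWithin]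
    with ε hm hb (hε : 0 < ε)
  have := abs_inv_mul_intervalIntegral_sub_le (lt_add_of_pos_right a hε) hm hb
  rw [add_sub_cancel_left] at this
  rw [Real.dist_eq, one_div]
  linarith

section OneSided

variable {β : Type*} [TopologicalSpace β] {f : ℝ → β} {a : ℝ} {b : β} {p : β → Prop}

lemma Filter.Tendsto.eventually_forall_Ioo_right (h : Tendsto f (𝓝[>] a) (𝓝 b))
    (hp : ∀ᶠ y in 𝓝 b, p y) : ∀ᶠ ε in 𝓝[>] 0, ∀ x ∈ Ioo a (a + ε), p (f x) := by
  obtain ⟨u, hu, hsub⟩ := mem_nhdsGT_iff_exists_Ioo_subset.1 (h hp)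
  filter_upwards [Ioo_mem_nhdsGT (sub_pos.2 hu)] with ε hε x hx
  exact hsub ⟨hx.1, by linarith [hx.2, hε.2]⟩

lemma Filter.Tendsto.eventually_forall_Ioo_left (h : Tendsto f (𝓝[<] a) (𝓝 b))
    (hp : ∀ᶠ y in 𝓝 b, p y) : ∀ᶠ ε in 𝓝[>] 0, ∀ x ∈ Ioo (a - ε) a, p (f x) := by
  obtain ⟨l, hl, hsub⟩ := mem_nhdsLT_iff_exists_Ioo_subset.1 (h hp)
  filter_upwards [Ioo_mem_nhdsGT (sub_pos.2 hl)] with ε hε x hx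
  exact hsub ⟨by linarith [hx.1, hε.2], hx.2⟩

end OneSided

theorem l1Fisher_jump_contribution_general
    (a δ : ℝ) (hδ : 0 < δ) (f : ℝ → ℝ)
    (hcontl : ContinuousOn f (Set.Ioo (a - δ) a))
    (hcontr : ContinuousOn f (Set.Ioo a (a + δ)))
    (L R : ℝ)
    (hL : Tendsto f (𝓝[<] a) (𝓝 L))
    (hR : Tendsto f (𝓝[>] a) (𝓝 R)) :
    Tendsto (fun ε : ℝ => (1 / ε) * ∫ x in a..(a + ε), |f x - f (x - ε)|)
      (𝓝[>] (0 : ℝ)) (𝓝 |R - L|) := by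
  refine tendsto_inv_mul_intervalIntegral_of_uniform ?_ fun η hη => ?_
  · filter_upwards [Ioo_mem_nhdsGT hδ] with ε hε
    have hright : ContinuousOn f (Ioo a (a + ε)) :=
      hcontr.mono (Ioo_subset_Ioo_right (by linarith [hε.2]))
    have hleft : ContinuousOn (fun x => f (x - ε)) (Ioo a (a + ε)) :=
      hcontl.comp (continuous_sub_right ε).continuousOn fun x hx =>
        ⟨by linarith [hx.1, hε.2], by linarith [hx.2]⟩
    exact (hright.sub hleft).abs.aestronglyMeasurable measurableSet_Ioo
  · have near (c : ℝ) : ∀ᶠ y in 𝓝 c, |y - c| ≤ η / 2 := by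
      filter_upwards [Metric.closedBall_mem_nhds c (half_pos hη)] with y hy
      rwa [Metric.mem_closedBall, Real.dist_eq] at hy
    filter_upwards [hR.eventually_forall_Ioo_right (near R),
      hL.eventually_forall_Ioo_left (near L)] with ε hRε hLε x hx
    have hxR := hRε x hx
    have hxL := hLε (x - ε) ⟨by linarith [hx.1], by linarith [hx.2]⟩
    calc |(|f x - f (x - ε)|) - (|R - L|)| ≤ |(f x - R) - (f (x - ε) - L)| := by
          rw [show (f x - R) - (f (x - ε) - L) = (f x - f (x - ε)) - (R - L) by ring]
          exact abs_abs_sub_abs_le_abs_sub _ _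
      _ ≤ |f x - R| + |f (x - ε) - L| := abs_sub _ _
      _ ≤ η := by linarith

/-- Contribution of a jump discontinuity to the L1-Fisher information:
`lim_{ε→0+} (1/ε) ∫_{a}^{a+ε} |f(x) − f(x−ε)| dx = |f(a⁺) − f(a⁻)|`. -/
theorem l1Fisher_jump_contribution
    (a δ : ℝ) (hδ : 0 < δ) (f : ℝ → ℝ)
    (hcontl : ContinuousOn f (Set.Ioo (a - δ) a))
    (hcontr : ContinuousOn f (Set.Ioo a (a + δ)))
    (hmonol : MonotoneOn f (Set.Ioo (a - δ) a) ∨ AntitoneOn f (Set.Ioo (a - δ) a))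
    (hmonor : MonotoneOn f (Set.Ioo a (a + δ)) ∨ AntitoneOn f (Set.Ioo a (a + δ)))
    (L R : ℝ)
    (hL : Tendsto f (𝓝[<] a) (𝓝 L))
    (hR : Tendsto f (𝓝[>] a) (𝓝 R)) :
    Tendsto (fun ε : ℝ => (1 / ε) * ∫ x in a..(a + ε), |f x - f (x - ε)|)
      (𝓝[>] (0 : ℝ)) (𝓝 |R - L|) :=
  l1Fisher_jump_contribution_general a δ hδ f hcontl hcontr L R hL hR
end
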